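/- Let G be a finite simple bipartite Δ-regular graph whose girth (length of its shortest cycle) is g, with g ≥ 4 finite, and let C(G) be a graph code of G over a finite field 𝔽_q (defined by nonzero coefficients a(v,e) at each vertex-incident-edge pair). Then C(G) has ((g−1)(Δ−1), g−1)-cooperative locality: for every set S of g−1 edges there exists a set Γ of at most (g−1)(Δ−1) edges, disjoint from S, such that any two codewords of C(G) agreeing on all edges in Γ agree on all edges in S. -/

import Mathlib

/-!
Fewer than `g` edges of a graph of girth `g` span a forest, so such a set `S` has an edge `e`
with an endpoint `v` that lies on no other edge of `S`. The parity check at `v` recovers the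
symbol on `e` from the `Δ - 1` other edges at `v`; peeling `e` off and recursing recovers all of
`S` from at most `|S| (Δ - 1)` edges outside `S`.
-/

open Finset

namespace SimpleGraph

variable {V : Type*} {G H : SimpleGraph V}

lemma IsAcyclic.exists_adj_forall_adj_eq [Finite H.edgeSet] (hH : H.IsAcyclic) {u v : V}
    (huv : H.Adj u v) : ∃ x y, H.Adj x y ∧ ∀ z, H.Adj x z → z = y := by
  have : Nonempty V := ⟨u⟩
  obtain ⟨x, _, p, hp, hmax⟩ := Walk.exists_isPath_forall_isPath_length_le_length H
  have hnil : ¬p.Nil := by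
    intro h
    have := hmax u v (Walk.cons huv .nil) (by simp [huv.ne])
    simp [Walk.length_eq_zero_iff.mpr h] at this
  refine ⟨x, p.snd, p.adj_snd hnil, fun z hxz => hH.eq_snd_of_adj_start hp hxz ?_⟩
  by_contra hz
  have := hmax z _ (p.cons hxz.symm) (hp.cons hz)
  simp at this

lemma isAcyclic_fromEdgeSet_of_card_lt_egirth {S : Finset (Sym2 V)} (hSG : ↑S ⊆ G.edgeSet)
    (hS : (S.card : ℕ∞) < G.egirth) : (fromEdgeSet (S : Set (Sym2 V))).IsAcyclic := by
  classical
  intro u c hc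
  have hle : fromEdgeSet (S : Set (Sym2 V)) ≤ G := fun x y hxy =>
    hSG ((fromEdgeSet_adj _).mp hxy).1
  have hcS : c.edges.toFinset ⊆ S := fun e he => by
    have := c.edges_subset_edgeSet (List.mem_toFinset.mp he)
    rw [edgeSet_fromEdgeSet] at this
    exact this.1
  have hlen : c.length ≤ S.card := by
    rw [← c.length_edges, ← List.toFinset_card_of_nodup hc.isTrail.edges_nodup]
    exact card_le_card hcS
  have := G.egirth_le_length (hc.mapLe hle)
  rw [Walk.length_mapLe] at this
  exact absurd (hS.trans_le (this.trans (by exact_mod_cast hlen))) (lt_irrefl _)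

lemma exists_leaf_of_card_lt_egirth {S : Finset (Sym2 V)} (hSG : ↑S ⊆ G.edgeSet)
    (hS : (S.card : ℕ∞) < G.egirth) (hne : S.Nonempty) :
    ∃ e ∈ S, ∃ v ∈ e, ∀ f ∈ S, v ∈ f → f = e := by
  set H := fromEdgeSet (S : Set (Sym2 V))
  have hH : H.IsAcyclic := isAcyclic_fromEdgeSet_of_card_lt_egirth hSG hS
  have : Finite H.edgeSet := (S.finite_toSet.sdiff).subset (edgeSet_fromEdgeSet _).le
  have hadj : ∀ {x y}, s(x, y) ∈ S → H.Adj x y := fun hxy =>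
    (fromEdgeSet_adj _).mpr ⟨hxy, G.ne_of_adj (hSG hxy)⟩
  obtain ⟨⟨u, w⟩, he⟩ := hne
  obtain ⟨x, y, hxy, hleaf⟩ := hH.exists_adj_forall_adj_eq (hadj he)
  refine ⟨s(x, y), ((fromEdgeSet_adj _).mp hxy).1, x, Sym2.mem_mk_left x y, ?_⟩
  rintro f hf hxf
  obtain ⟨z, rfl⟩ := Sym2.mem_iff_exists.mp hxf
  rw [hleaf z (hadj hf)]

lemma exists_leaf_edgeFinset_of_card_lt_egirth [Fintype G.edgeSet] (S : Finset G.edgeFinset)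
    (hS : (S.card : ℕ∞) < G.egirth) (hne : S.Nonempty) :
    ∃ e ∈ S, ∃ v ∈ (e : Sym2 V), ∀ f ∈ S, v ∈ (f : Sym2 V) → f = e := by
  obtain ⟨_, he, v, hv, hleaf⟩ := exists_leaf_of_card_lt_egirth
    (S := S.map (Function.Embedding.subtype _))
    (fun _ hf => by
      obtain ⟨f, -, rfl⟩ := mem_map.mp hf
      exact mem_edgeFinset.mp f.2)
    (by rwa [card_map]) hne.map
  obtain ⟨e, heS, rfl⟩ := mem_map.mp he
  exact ⟨e, heS, v, hv, fun f hf hvf => Subtype.ext (hleaf _ (mem_map_of_mem _ hf) hvf)⟩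

lemma natCast_girth_sub_one_lt_egirth (G : SimpleGraph V) :
    ((G.girth - 1 : ℕ) : ℕ∞) < G.egirth := by
  by_cases h : G.IsAcyclic
  · rw [h.egirth_eq_top]
    exact ENat.natCast_lt_top _
  · have h3 := three_le_girth h
    rw [← ENat.natCast_toNat (egirth_eq_top.not.mpr h)]
    exact_mod_cast (by unfold girth at h3 ⊢; omega)

end SimpleGraph

def Determines {ι α : Type*} (C : Set (ι → α)) (Γ S : Finset ι) : Prop :=
  ∀ x ∈ C, ∀ y ∈ C, (∀ i ∈ Γ, x i = y i) → ∀ i ∈ S, x i = y i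

namespace Determines

variable {ι α : Type*} {C : Set (ι → α)} {Γ Γ' S T : Finset ι}

lemma mono (h : Determines C Γ S) (hΓ : Γ ⊆ Γ') : Determines C Γ' S :=
  fun x hx y hy hxy => h x hx y hy fun i hi => hxy i (hΓ hi)

lemma union [DecidableEq ι] (hS : Determines C Γ S) (hT : Determines C (Γ ∪ S) T) :
    Determines C Γ (S ∪ T) := by
  intro x hx y hy hxy i hi
  have hxyS := hS x hx y hy hxy
  rcases mem_union.mp hi with hi | hi
  · exact hxyS i hi
  · exact hT x hx y hy (fun j hj => (mem_union.mp hj).elim (hxy j) (hxyS j)) i hi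

end Determines

namespace SimpleGraph

variable {V F : Type*} [Fintype V] [DecidableEq V] (G : SimpleGraph V) [DecidableRel G.Adj]
  [CommRing F] [NoZeroDivisors F] (a : V → Sym2 V → F)

def graphCode : Submodule F (G.edgeFinset → F) where
  carrier := {x | ∀ v : V,
    ∑ e : G.edgeFinset, (if v ∈ (e : Sym2 V) then a v (e : Sym2 V) * x e else 0) = 0}
  add_mem' {x y} hx hy v := by
    simp only [Pi.add_apply, mul_add, ite_add_zero, sum_add_distrib, hx v, hy v, add_zero]
  zero_mem' v := by simp
  smul_mem' c x hx v := calc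
    _ = c * ∑ e : G.edgeFinset, (if v ∈ (e : Sym2 V) then a v (e : Sym2 V) * x e else 0) := by
      rw [mul_sum]
      exact sum_congr rfl fun e _ => by split_ifs <;> simp [mul_left_comm]
    _ = 0 := by rw [hx v, mul_zero]

def incidentEdges (v : V) : Finset G.edgeFinset := univ.filter fun e => v ∈ (e : Sym2 V)

lemma card_incidentEdges (v : V) : (G.incidentEdges v).card = G.degree v := by
  rw [incidentEdges, univ_eq_attach, filter_attach (fun e : Sym2 V => v ∈ e), card_map,
    card_attach, ← incidenceFinset_eq_filter, card_incidenceFinset_eq_degree]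

variable {G a}

lemma graphCode_determines_of_mem {v : V} {e : G.edgeFinset} (hv : v ∈ (e : Sym2 V))
    (ha : a v e ≠ 0) :
    Determines (G.graphCode a : Set (G.edgeFinset → F)) ((G.incidentEdges v).erase e) {e} := by
  intro x hx y hy hxy i hi
  rw [mem_singleton.mp hi]
  have hcheck := sub_mem hx hy v
  rw [sum_eq_single e ?_ (by simp), if_pos hv] at hcheck
  · exact sub_eq_zero.mp ((mul_eq_zero.mp hcheck).resolve_left ha)
  · intro f _ hfe
    split_ifs with hvf
    · rw [Pi.sub_apply, hxy f (mem_erase.mpr ⟨hfe, by simp [incidentEdges, hvf]⟩), sub_self,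
        mul_zero]
    · rfl

lemma exists_determines_of_card_lt_egirth {Δ : ℕ} (hdeg : ∀ v, G.degree v ≤ Δ)
    (ha : ∀ v : V, ∀ e ∈ G.incidenceSet v, a v e ≠ 0) (S : Finset G.edgeFinset)
    (hS : (S.card : ℕ∞) < G.egirth) :
    ∃ Γ, Disjoint Γ S ∧ Γ.card ≤ S.card * (Δ - 1) ∧
      Determines (G.graphCode a : Set (G.edgeFinset → F)) Γ S := by
  induction S using Finset.strongInduction with
  | H S ih =>
  rcases S.eq_empty_or_nonempty with rfl | hne
  · exact ⟨∅, by simp, by simp, fun _ _ _ _ _ i hi => absurd hi (notMem_empty i)⟩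
  obtain ⟨e, heS, v, hv, hleaf⟩ := exists_leaf_edgeFinset_of_card_lt_egirth S hS hne
  obtain ⟨Γ₀, hΓ₀S, hΓ₀card, hΓ₀⟩ := ih (S.erase e) (erase_ssubset heS)
    (lt_of_le_of_lt (by exact_mod_cast card_le_card (erase_subset e S)) hS)
  -- `Γ₀` avoids `S.erase e` but may contain `e`.
  refine ⟨Γ₀.erase e ∪ (G.incidentEdges v).erase e, ?_, ?_, ?_⟩
  · refine disjoint_union_left.mpr ⟨Finset.disjoint_left.mpr fun f hf hfS => ?_,
      Finset.disjoint_left.mpr fun f hf hfS => ?_⟩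
    · obtain ⟨hfe, hf⟩ := mem_erase.mp hf
      exact Finset.disjoint_left.mp hΓ₀S hf (mem_erase.mpr ⟨hfe, hfS⟩)
    · obtain ⟨hfe, hf⟩ := mem_erase.mp hf
      exact hfe (hleaf f hfS (mem_filter.mp hf).2)
  · have hN : ((G.incidentEdges v).erase e).card ≤ Δ - 1 := by
      rw [card_erase_of_mem (by simp [incidentEdges, hv]), card_incidentEdges]
      exact Nat.sub_le_sub_right (hdeg v) 1
    calc _ ≤ (Γ₀.erase e).card + ((G.incidentEdges v).erase e).card := card_union_le _ _
      _ ≤ (S.erase e).card * (Δ - 1) + (Δ - 1) :=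
        add_le_add (card_erase_le.trans hΓ₀card) hN
      _ = S.card * (Δ - 1) := by rw [← card_erase_add_one heS, add_one_mul]
  · have he := (graphCode_determines_of_mem hv (ha v e ⟨mem_edgeFinset.mp e.2, hv⟩)).mono
      (subset_union_right (s₁ := Γ₀.erase e))
    have := he.union (hΓ₀.mono fun f hf => ?_)
    · rwa [← insert_eq, insert_erase heS] at this
    · by_cases hfe : f = e
      · simp [hfe]
      · simp [hf, hfe]

end SimpleGraph

theorem stmt_7_general {V : Type*} [Fintype V] [DecidableEq V]
    (G : SimpleGraph V) [DecidableRel G.Adj]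
    (Δ : ℕ) (hreg : G.IsRegularOfDegree Δ)
    (g : ℕ) (hgirth : G.girth = g)
    (F : Type*) [Field F]
    (a : V → Sym2 V → F) (ha : ∀ v : V, ∀ e ∈ G.incidenceSet v, a v e ≠ 0)
    (Code : Set (G.edgeFinset → F))
    (hCode : Code = {x | ∀ v : V,
      ∑ e : G.edgeFinset, (if v ∈ (e : Sym2 V) then a v (e : Sym2 V) * x e else 0) = 0})
    (S : Finset G.edgeFinset) (hS : S.card = g - 1) :
    ∃ Γ : Finset G.edgeFinset, Disjoint Γ S ∧ Γ.card ≤ (g - 1) * (Δ - 1) ∧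
      ∀ x ∈ Code, ∀ y ∈ Code, (∀ e ∈ Γ, x e = y e) → ∀ e ∈ S, x e = y e := by
  have hS' : (S.card : ℕ∞) < G.egirth := hS ▸ hgirth ▸ G.natCast_girth_sub_one_lt_egirth
  obtain ⟨Γ, hdisj, hcard, hdet⟩ :=
    SimpleGraph.exists_determines_of_card_lt_egirth (fun v => (hreg v).le) ha S hS'
  subst hCode
  exact ⟨Γ, hdisj, hS ▸ hcard, hdet⟩

/-- a graph code of a finite simple bipartite `Δ`-regular graph with finite
girth `g ≥ 4` has `((g−1)(Δ−1), g−1)`-cooperative locality. -/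
theorem stmt_7 {V : Type*} [Fintype V] [DecidableEq V]
    (G : SimpleGraph V) [DecidableRel G.Adj]
    (hbip : G.Colorable 2)
    (Δ : ℕ) (hreg : G.IsRegularOfDegree Δ)
    (g : ℕ) (hg : 4 ≤ g) (hgirth : G.girth = g)
    (F : Type*) [Field F] [Fintype F]
    (a : V → Sym2 V → F) (ha : ∀ v : V, ∀ e ∈ G.incidenceSet v, a v e ≠ 0)
    (Code : Set (G.edgeFinset → F))
    (hCode : Code = {x | ∀ v : V,
      ∑ e : G.edgeFinset, (if v ∈ (e : Sym2 V) then a v (e : Sym2 V) * x e else 0) = 0})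
    (S : Finset G.edgeFinset) (hS : S.card = g - 1) :
    ∃ Γ : Finset G.edgeFinset, Disjoint Γ S ∧ Γ.card ≤ (g - 1) * (Δ - 1) ∧
      ∀ x ∈ Code, ∀ y ∈ Code, (∀ e ∈ Γ, x e = y e) → ∀ e ∈ S, x e = y e :=
  stmt_7_general G Δ hreg g hgirth F a ha Code hCode S hS
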